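/- Let θ : E → [0,1] on a finite set E with |E| ≥ K, and λ_1,…,λ_K ∈ [0,1] with (1−λ_1) ≥ … ≥ (1−λ_K). Among lists of K distinct items, V_DCM(A) = 1 − ∏_{k=1}^K (1 − (1−λ_k) θ_{a_k}) is maximized by placing the k-th most attractive item at the position with the k-th largest value of (1−λ_k). -/

import Mathlib

open Finset

private lemma dcm_key : ∀ (K : ℕ) (w x y : Fin K → ℝ),
    (∀ k, w k ∈ Set.Icc (0:ℝ) 1) → (∀ k, x k ∈ Set.Icc (0:ℝ) 1) →
    (∀ k, y k ∈ Set.Icc (0:ℝ) 1) →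
    (∀ k l : Fin K, k ≤ l → w l ≤ w k) →
    (∀ k : Fin K, (Finset.univ.filter (fun j => x k < y j)).card ≤ (k : ℕ)) →
    ∏ k, (1 - w k * x k) ≤ ∏ k, (1 - w k * y k) := by
  intro K
  induction K with
  | zero => intro w x y _ _ _ _ _; simp
  | succ K ih =>
    intro w x y hw hx hy hwa hcard
    have hfac : ∀ (z : Fin (K+1) → ℝ), (∀ k, z k ∈ Set.Icc (0:ℝ) 1) →
        ∀ k, 0 ≤ 1 - w k * z k := by
      intro z hz k
      have h1 := hw k; have h2 := hz k
      simp only [Set.mem_Icc] at h1 h2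
      nlinarith
    obtain ⟨j0, -, hj0⟩ := Finset.exists_max_image Finset.univ y ⟨0, mem_univ 0⟩
    set σ := Equiv.swap (0 : Fin (K+1)) j0 with hσ
    set y' : Fin (K+1) → ℝ := fun k => y (σ k) with hy'
    have hy'mem : ∀ k, y' k ∈ Set.Icc (0:ℝ) 1 := fun k => hy _
    -- all y values are ≤ x 0
    have hx0 : ∀ j, y j ≤ x 0 := by
      intro j
      by_contra h
      push_neg at h
      have h0 : (Finset.univ.filter (fun j => x 0 < y j)).card ≤ 0 := by
        simpa using hcard 0
      have hjm : j ∈ Finset.univ.filter (fun j => x 0 < y j) := by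
        simp [h]
      have := Finset.card_pos.mpr ⟨j, hjm⟩
      omega
    -- step A : swapped product ≤ original product
    have stepA : ∏ k, (1 - w k * y' k) ≤ ∏ k, (1 - w k * y k) := by
      by_cases h0 : j0 = 0
      · simp [hy', hσ, h0]
      · have hj0ne : j0 ≠ 0 := h0
        have hmem1 : j0 ∈ (Finset.univ : Finset (Fin (K+1))).erase 0 := by
          simp [hj0ne]
        have expand : ∀ g : Fin (K+1) → ℝ,
            ∏ k, g k = g 0 * (g j0 * ∏ k ∈ ((Finset.univ.erase 0).erase j0), g k) := by
          intro g
          rw [Finset.mul_prod_erase _ g hmem1, Finset.mul_prod_erase _ g (mem_univ 0)]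
        rw [expand, expand]
        have hrest : ∀ k ∈ ((Finset.univ : Finset (Fin (K+1))).erase 0).erase j0,
            y' k = y k := by
          intro k hk
          simp only [Finset.mem_erase] at hk
          simp [hy', hσ, Equiv.swap_apply_of_ne_of_ne hk.2.1 hk.1]
        rw [Finset.prod_congr rfl (fun k hk => by rw [hrest k hk])]
        have hP : 0 ≤ ∏ k ∈ ((Finset.univ.erase 0).erase j0), (1 - w k * y k) :=
          Finset.prod_nonneg fun k _ => hfac y hy k
        have hy'0 : y' 0 = y j0 := by simp [hy', hσ]
        have hy'j0 : y' j0 = y 0 := by simp [hy', hσ]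
        rw [hy'0, hy'j0]
        have hw0 := hw 0; have hwj0 := hw j0
        have hy0 := hy 0; have hyj0 := hy j0
        simp only [Set.mem_Icc] at hw0 hwj0 hy0 hyj0
        have hww : w j0 ≤ w 0 := hwa 0 j0 (Fin.zero_le j0)
        have hyy : y 0 ≤ y j0 := hj0 0 (mem_univ 0)
        have key2 : (1 - w 0 * y j0) * (1 - w j0 * y 0) ≤
            (1 - w 0 * y 0) * (1 - w j0 * y j0) := by nlinarith
        calc (1 - w 0 * y j0) * ((1 - w j0 * y 0) * ∏ k ∈ ((Finset.univ.erase 0).erase j0), (1 - w k * y k))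
            = ((1 - w 0 * y j0) * (1 - w j0 * y 0)) * ∏ k ∈ ((Finset.univ.erase 0).erase j0), (1 - w k * y k) := by ring
          _ ≤ ((1 - w 0 * y 0) * (1 - w j0 * y j0)) * ∏ k ∈ ((Finset.univ.erase 0).erase j0), (1 - w k * y k) :=
              mul_le_mul_of_nonneg_right key2 hP
          _ = (1 - w 0 * y 0) * ((1 - w j0 * y j0) * ∏ k ∈ ((Finset.univ.erase 0).erase j0), (1 - w k * y k)) := by ring
    -- step B : x product ≤ swapped product
    have stepB : ∏ k, (1 - w k * x k) ≤ ∏ k, (1 - w k * y' k) := by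
      rw [Fin.prod_univ_succ, Fin.prod_univ_succ]
      have hhead : 1 - w 0 * x 0 ≤ 1 - w 0 * y' 0 := by
        have : y' 0 = y j0 := by simp [hy', hσ]
        rw [this]
        have hw0 := hw 0
        simp only [Set.mem_Icc] at hw0
        nlinarith [hx0 j0]
      have htail : ∏ k : Fin K, (1 - w k.succ * x k.succ) ≤
          ∏ k : Fin K, (1 - w k.succ * y' k.succ) := by
        apply ih (fun k => w k.succ) (fun k => x k.succ) (fun k => y' k.succ)
          (fun k => hw _) (fun k => hx _) (fun k => hy'mem _)
          (fun k l hkl => hwa _ _ (Fin.succ_le_succ_iff.mpr hkl))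
        intro k
        set S := Finset.univ.filter (fun j : Fin K => x k.succ < y' j.succ) with hS
        by_cases hSne : S.Nonempty
        · obtain ⟨j1, hj1⟩ := hSne
          simp only [hS, Finset.mem_filter] at hj1
          set T := Finset.univ.filter (fun j : Fin (K+1) => x k.succ < y j) with hT
          have hTcard : T.card ≤ (k : ℕ) + 1 := by
            have := hcard k.succ
            simpa using this
          have hj0T : j0 ∈ T := by
            have h1 : x k.succ < y' j1.succ := hj1.2
            have h2 : y' j1.succ ≤ y j0 := hj0 _ (mem_univ _)
            simp only [hT, Finset.mem_filter]
            exact ⟨mem_univ _, lt_of_lt_of_le h1 h2⟩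
          have hmap : ∀ j ∈ S, σ j.succ ∈ T.erase j0 := by
            intro j hj
            simp only [hS, Finset.mem_filter] at hj
            have hne : σ j.succ ≠ j0 := by
              intro h
              have : j.succ = σ j0 := by
                rw [← h]; simp [hσ]
              simp [hσ, Equiv.swap_apply_right] at this
            simp only [Finset.mem_erase, hT, Finset.mem_filter]
            exact ⟨hne, mem_univ _, hj.2⟩
          have hinj : Set.InjOn (fun j : Fin K => σ j.succ) S := by
            intro a _ b _ hab
            simp only at hab
            exact Fin.succ_injective _ (σ.injective hab)
          have hcard2 : S.card ≤ (T.erase j0).card :=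
            Finset.card_le_card_of_injOn _ hmap hinj
          have : (T.erase j0).card = T.card - 1 := Finset.card_erase_of_mem hj0T
          have hT1 : 1 ≤ T.card := Finset.card_pos.mpr ⟨j0, hj0T⟩
          omega
        · rw [Finset.not_nonempty_iff_eq_empty] at hSne
          simp [hSne]
      have h0 : 0 ≤ ∏ k : Fin K, (1 - w k.succ * x k.succ) :=
        Finset.prod_nonneg fun k _ => hfac x hx k.succ
      have hhead' : 0 ≤ 1 - w 0 * y' 0 := hfac y' hy'mem 0
      exact mul_le_mul hhead htail h0 hhead'
    exact le_trans stepB stepA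

theorem dcm_optimal_list {E : Type*} [Fintype E] (K : ℕ) (hK : K ≤ Fintype.card E)
    (θ : E → ℝ) (hθ : ∀ e, θ e ∈ Set.Icc (0:ℝ) 1)
    (lam : Fin K → ℝ) (hlam : ∀ k, lam k ∈ Set.Icc (0:ℝ) 1)
    (hwmono : ∀ k l : Fin K, k ≤ l → 1 - lam l ≤ 1 - lam k)
    (A : Fin K ↪ E)
    (hsorted : ∀ k l : Fin K, k ≤ l → θ (A l) ≤ θ (A k))
    (htop : ∀ e, e ∉ Set.range A → ∀ k, θ e ≤ θ (A k)) :
    ∀ B : Fin K ↪ E,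
      1 - ∏ k, (1 - (1 - lam k) * θ (B k)) ≤
        1 - ∏ k, (1 - (1 - lam k) * θ (A k)) := by
  intro B
  apply sub_le_sub_left
  apply dcm_key K (fun k => 1 - lam k) (fun k => θ (A k)) (fun k => θ (B k))
  · intro k
    have := hlam k
    simp only [Set.mem_Icc] at this ⊢
    constructor <;> linarith [this.1, this.2]
  · intro k; exact hθ _
  · intro k; exact hθ _
  · exact hwmono
  · intro k
    haveI : Nonempty (Fin K) := ⟨k⟩
    apply le_trans (Finset.card_le_card_of_injOn
      (fun j => Function.invFun A (B j))
      ?_ ?_) (le_of_eq (Fin.card_Iio k))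
    · intro j hj
      simp only [Finset.mem_coe, Finset.mem_filter] at hj
      have hrange : B j ∈ Set.range A := by
        by_contra h
        exact absurd hj.2 (not_lt.mpr (htop _ h k))
      have hAe : A (Function.invFun A (B j)) = B j := Function.invFun_eq hrange
      simp only [Finset.mem_coe, Finset.mem_Iio]
      by_contra h
      push_neg at h
      have := hsorted k _ h
      rw [hAe] at this
      exact absurd hj.2 (not_lt.mpr this)
    · intro a ha b hb hab
      simp only [Finset.mem_coe, Finset.mem_filter] at ha hb
      have hra : B a ∈ Set.range A := by
        by_contra h; exact absurd ha.2 (not_lt.mpr (htop _ h k))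
      have hrb : B b ∈ Set.range A := by
        by_contra h; exact absurd hb.2 (not_lt.mpr (htop _ h k))
      have h1 : A (Function.invFun A (B a)) = B a := Function.invFun_eq hra
      have h2 : A (Function.invFun A (B b)) = B b := Function.invFun_eq hrb
      apply B.injective
      rw [← h1, ← h2]
      exact congrArg _ hab
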